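/- There exists a constant C > 0 such that for all n ∈ ℕ, all reals r with 1 ≤ r ≤ √n / 2, and all z ∈ ℤ² with ‖z‖ ≥ √n, the simple random walk on ℤ² started at z satisfies P_z[ T_r ≤ n ] ≤ C / log( n / r² ), where T_r = inf{ t ≥ 0 : ‖S(t)‖ ≤ r }. -/

import Mathlib

open Real

/-- A single step of the simple random walk on `ℤ^d`: the pair `(i, b)` encodes a move by
`+eᵢ` (if `b = true`) or `-eᵢ` (if `b = false`).  The uniform distribution on `Fin d × Bool`
corresponds to the uniform distribution on the `2d` unit vectors. -/
def step {d : ℕ} (a : Fin d × Bool) : Fin d → ℤ :=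
  fun j => if j = a.1 then (if a.2 then 1 else -1) else 0

/-- The position `S(k)` of the walk started at `z` after `k` steps, driven by the
sequence of i.i.d. uniform steps `ω : Fin n → Fin d × Bool` (meaningful for `k ≤ n`). -/
def walk {d n : ℕ} (z : Fin d → ℤ) (ω : Fin n → Fin d × Bool) (k : ℕ) : Fin d → ℤ :=
  z + ∑ i ∈ Finset.univ.filter (fun i : Fin n => (i : ℕ) < k), step (ω i)

/-- Probability of an event for the `n`-step simple random walk on `ℤ^d`:
the driving step sequences are uniform among the `(2d)^n` possibilities. -/
noncomputable def prW (d n : ℕ) (E : Set (Fin n → Fin d × Bool)) : ℝ :=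
  E.ncard / (2 * d) ^ n

/-- Expectation of a random variable of the `n`-step simple random walk on `ℤ^d`. -/
noncomputable def exW (d n : ℕ) (f : (Fin n → Fin d × Bool) → ℝ) : ℝ :=
  (∑ ω : Fin n → Fin d × Bool, f ω) / (2 * d) ^ n

/-- Shannon entropy (base 2) of a random variable `X` of the `n`-step walk:
`H(X) = ∑ₐ -P[X = a] · log₂ P[X = a]`. -/
noncomputable def entW {α : Type*} (d n : ℕ) (X : (Fin n → Fin d × Bool) → α) : ℝ :=
  ∑' a : α, -(prW d n {ω | X ω = a} * logb 2 (prW d n {ω | X ω = a}))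

/-- The range `R(n) = {S(0), …, S(n)}` of the `n`-step walk started at `z`. -/
def rangeW {d n : ℕ} (z : Fin d → ℤ) (ω : Fin n → Fin d × Bool) : Finset (Fin d → ℤ) :=
  (Finset.range (n + 1)).image (walk z ω)

/-- The inner boundary `∂A` of a finite set `A ⊆ ℤ^d`: the points of `A` adjacent
(at graph distance 1, i.e. reachable by a single step) to some vertex of the complement. -/
def innerBdry {d : ℕ} (A : Finset (Fin d → ℤ)) : Finset (Fin d → ℤ) :=
  A.filter fun x => ∃ a : Fin d × Bool, x + step a ∉ A

/-- The Euclidean (`L²`) norm on `ℤ^d`. -/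
noncomputable def eNorm {d : ℕ} (x : Fin d → ℤ) : ℝ :=
  Real.sqrt (∑ i, ((x i : ℝ)) ^ 2)

/-!
Let `τ` be the first time the walk enters the ball `B_r` or reaches distance `2‖z‖`. The function
`log (‖x‖² + 1)` is subharmonic for the walk on `ℤ²`, so optional stopping at `τ ∧ n` bounds the
probability of stopping in `B_r` by `2 log 9 / log (n / r²)`; and `‖x‖² - t` is a martingale, so
the probability of stopping at distance `2‖z‖` is at most `(‖z‖² + n) / (4‖z‖²) ≤ 1/2`. By the
strong Markov property at `τ`, the supremum `P` of the hitting probabilities over all starting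
points with `‖z‖ ≥ √n` therefore satisfies `P ≤ 2 log 9 / log (n / r²) + P / 2`.

Expectations of the stopped walk are handled through their first-step recursion (`stoppedMean`),
so that optional stopping and the strong Markov property become inductions on the number of steps.
-/
section Walk

variable {d n : ℕ}

lemma walk_zero (z : Fin d → ℤ) (ω : Fin n → Fin d × Bool) : walk z ω 0 = z := by
  simp [walk]

lemma walk_cons_succ (z : Fin d → ℤ) (a : Fin d × Bool) (ω : Fin n → Fin d × Bool) (t : ℕ) :
    walk z (Fin.cons a ω : Fin (n + 1) → Fin d × Bool) (t + 1) = walk (z + step a) ω t := by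
  simp only [walk, Finset.sum_filter, Fin.sum_univ_succ, Fin.val_zero, Fin.val_succ,
    Fin.cons_zero, Fin.cons_succ, add_lt_add_iff_right, Nat.zero_lt_succ, if_true, add_assoc]

lemma exists_walk_cons_mem_iff (K : Set (Fin d → ℤ)) (z : Fin d → ℤ) (a : Fin d × Bool)
    (ω : Fin n → Fin d × Bool) :
    (∃ t ≤ n + 1, walk z (Fin.cons a ω : Fin (n + 1) → Fin d × Bool) t ∈ K) ↔
      z ∈ K ∨ ∃ t ≤ n, walk (z + step a) ω t ∈ K := by
  constructor
  · rintro ⟨_ | t, ht, hK⟩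
    · exact Or.inl (by rwa [walk_zero] at hK)
    · exact Or.inr ⟨t, by omega, by rwa [walk_cons_succ] at hK⟩
  · rintro (hK | ⟨t, ht, hK⟩)
    · exact ⟨0, by omega, by rwa [walk_zero]⟩
    · exact ⟨t + 1, by omega, by rwa [walk_cons_succ]⟩

lemma exW_succ (f : (Fin (n + 1) → Fin d × Bool) → ℝ) :
    exW d (n + 1) f = (∑ a, exW d n (fun ω => f (Fin.cons a ω))) / (2 * d) := by
  simp only [exW, ← Finset.sum_div, div_div, ← pow_succ]
  rw [← (Fin.consEquiv fun _ => Fin d × Bool).sum_comp, Fintype.sum_prod_type]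
  rfl

lemma exW_const (hd : d ≠ 0) (c : ℝ) : exW d n (fun _ => c) = c := by
  simp only [exW, Finset.sum_const, Finset.card_univ, Fintype.card_pi, Fintype.card_prod,
    Fintype.card_fin, Fintype.card_bool, Finset.prod_const, nsmul_eq_mul, Nat.cast_pow,
    Nat.cast_mul, Nat.cast_ofNat]
  field_simp

lemma prW_eq_exW (E : Set (Fin n → Fin d × Bool)) : prW d n E = exW d n (E.indicator 1) := by
  classical
  simp [prW, exW, Set.ncard_eq_toFinset_card', Set.indicator_apply, Finset.sum_boole]

end Walk

section StoppedMean

variable {d : ℕ}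

noncomputable def stepMean (F : (Fin d → ℤ) → ℝ) (x : Fin d → ℤ) : ℝ :=
  (∑ a, F (x + step a)) / (2 * d)

open Classical in
/-- `stoppedMean S F n x` is `E_x[F(S(τ ∧ n))]`, where `τ` is the hitting time of `S`. -/
noncomputable def stoppedMean (S : Set (Fin d → ℤ)) (F : (Fin d → ℤ) → ℝ) :
    ℕ → (Fin d → ℤ) → ℝ
  | 0, x => F x
  | n + 1, x => if x ∈ S then F x else stepMean (stoppedMean S F n) x

variable {S : Set (Fin d → ℤ)} {F G : (Fin d → ℤ) → ℝ}

lemma stepMean_le_stepMean {x : Fin d → ℤ} (h : ∀ a, F (x + step a) ≤ G (x + step a)) :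
    stepMean F x ≤ stepMean G x :=
  div_le_div_of_nonneg_right (Finset.sum_le_sum fun a _ => h a) (by positivity)

lemma stepMean_add (x : Fin d → ℤ) : stepMean (F + G) x = stepMean F x + stepMean G x := by
  simp only [stepMean, Pi.add_apply, Finset.sum_add_distrib, add_div]

lemma stepMean_const_mul (c : ℝ) (x : Fin d → ℤ) :
    stepMean (fun y => c * F y) x = c * stepMean F x := by
  simp only [stepMean, ← Finset.mul_sum, mul_div_assoc]

lemma stepMean_const (hd : d ≠ 0) (c : ℝ) (x : Fin d → ℤ) : stepMean (fun _ => c) x = c := by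
  simp only [stepMean, Finset.sum_const, Finset.card_univ, Fintype.card_prod, Fintype.card_fin,
    Fintype.card_bool, nsmul_eq_mul, Nat.cast_mul, Nat.cast_ofNat]
  field_simp

lemma stoppedMean_add (n : ℕ) (x : Fin d → ℤ) :
    stoppedMean S (F + G) n x = stoppedMean S F n x + stoppedMean S G n x := by
  induction n generalizing x with
  | zero => rfl
  | succ n ih =>
    simp only [stoppedMean]
    split_ifs
    · rfl
    · rw [← stepMean_add]; exact congrArg₂ _ (funext ih) rfl

lemma stoppedMean_const_mul (c : ℝ) (n : ℕ) (x : Fin d → ℤ) :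
    stoppedMean S (fun y => c * F y) n x = c * stoppedMean S F n x := by
  induction n generalizing x with
  | zero => rfl
  | succ n ih =>
    simp only [stoppedMean]
    split_ifs
    · rfl
    · rw [← stepMean_const_mul]; exact congrArg₂ _ (funext ih) rfl

lemma stoppedMean_const (hd : d ≠ 0) (c : ℝ) (n : ℕ) (x : Fin d → ℤ) :
    stoppedMean S (fun _ => c) n x = c := by
  induction n generalizing x with
  | zero => rfl
  | succ n ih =>
    simp only [stoppedMean]
    split_ifs
    · rfl
    · rw [show stoppedMean S (fun _ => c) n = fun _ => c from funext ih, stepMean_const hd]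

lemma stoppedMean_le_stoppedMean_of_le_on (R : Set (Fin d → ℤ))
    (hR : ∀ x ∈ R, x ∉ S → ∀ a, x + step a ∈ R) (hFG : ∀ x ∈ R, F x ≤ G x) (n : ℕ) :
    ∀ x ∈ R, stoppedMean S F n x ≤ stoppedMean S G n x := by
  induction n with
  | zero => exact hFG
  | succ n ih =>
    intro x hx
    simp only [stoppedMean]
    split_ifs with hS
    · exact hFG x hx
    · exact stepMean_le_stepMean fun a => ih _ (hR x hx hS a)

lemma stoppedMean_mono (hFG : F ≤ G) (n : ℕ) (x : Fin d → ℤ) :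
    stoppedMean S F n x ≤ stoppedMean S G n x :=
  stoppedMean_le_stoppedMean_of_le_on Set.univ (fun _ _ _ _ => trivial)
    (fun x _ => hFG x) n x trivial

lemma stoppedMean_le_succ (hF : ∀ x ∉ S, F x ≤ stepMean F x) (n : ℕ) (x : Fin d → ℤ) :
    stoppedMean S F n x ≤ stoppedMean S F (n + 1) x := by
  induction n generalizing x with
  | zero =>
    simp only [stoppedMean]
    split_ifs with hS
    · rfl
    · exact hF x hS
  | succ n ih =>
    rw [stoppedMean, stoppedMean]
    split_ifs
    · rfl
    · exact stepMean_le_stepMean fun a => ih _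

lemma monotone_stoppedMean (hF : ∀ x ∉ S, F x ≤ stepMean F x) (x : Fin d → ℤ) :
    Monotone fun n => stoppedMean S F n x :=
  monotone_nat_of_le_succ fun n => stoppedMean_le_succ hF n x

lemma le_stoppedMean (hF : ∀ x ∉ S, F x ≤ stepMean F x) (n : ℕ) (x : Fin d → ℤ) :
    F x ≤ stoppedMean S F n x :=
  monotone_stoppedMean hF x (Nat.zero_le n)

lemma stoppedMean_le_add_mul (hd : d ≠ 0) {c : ℝ} (hc : 0 ≤ c)
    (hF : ∀ x ∉ S, stepMean F x ≤ F x + c) (n : ℕ) (x : Fin d → ℤ) :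
    stoppedMean S F n x ≤ F x + n * c := by
  induction n generalizing x with
  | zero => simp [stoppedMean]
  | succ n ih =>
    simp only [stoppedMean]
    split_ifs with hS
    · exact le_add_of_nonneg_right (by positivity)
    · calc stepMean (stoppedMean S F n) x
          ≤ stepMean (F + fun _ => n * c) x := stepMean_le_stepMean fun a => ih _
        _ = stepMean F x + n * c := by rw [stepMean_add, stepMean_const hd]
        _ ≤ F x + (n + 1 : ℕ) * c := by push_cast; linarith [hF x hS]

lemma stoppedMean_le_stoppedMean_union {D : Set (Fin d → ℤ)} {N : ℕ} (hFG : F ≤ G)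
    (hD : ∀ x ∈ D, ∀ m ≤ N, stoppedMean S F m x ≤ G x) :
    ∀ n ≤ N, ∀ x, stoppedMean S F n x ≤ stoppedMean (S ∪ D) G n x := by
  intro n
  induction n with
  | zero => exact fun _ => hFG
  | succ n ih =>
    intro hn x
    by_cases hS : x ∈ S
    · rw [stoppedMean, stoppedMean, if_pos hS, if_pos (Set.mem_union_left D hS)]
      exact hFG x
    by_cases hxD : x ∈ D
    · exact (hD x hxD _ hn).trans_eq (if_pos (Set.mem_union_right S hxD)).symm
    · rw [stoppedMean, stoppedMean, if_neg hS, if_neg (by simp [hS, hxD])]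
      exact stepMean_le_stepMean fun a => ih (by omega) _

end StoppedMean

lemma prW_hit_eq_stoppedMean {d : ℕ} (hd : d ≠ 0) (K : Set (Fin d → ℤ)) (n : ℕ)
    (z : Fin d → ℤ) :
    prW d n {ω | ∃ t ≤ n, walk z ω t ∈ K} = stoppedMean K (K.indicator 1) n z := by
  induction n generalizing z with
  | zero =>
    simp only [prW_eq_exW, nonpos_iff_eq_zero, exists_eq_left, walk_zero]
    by_cases hz : z ∈ K
    · simp only [hz, stoppedMean, Set.ofPred_true, Set.indicator_univ, Set.indicator_of_mem]
      exact exW_const hd 1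
    · simpa [hz, stoppedMean] using exW_const hd (n := 0) 0
  | succ n ih =>
    rw [prW_eq_exW, exW_succ, stoppedMean]
    by_cases hz : z ∈ K
    · simp [exists_walk_cons_mem_iff, hz, exW_const hd]
      field_simp
    · rw [if_neg hz, stepMean]
      congr 1
      refine Finset.sum_congr rfl fun a _ => ?_
      rw [← ih, prW_eq_exW]
      congr 1
      funext ω
      exact Set.indicator_eq_indicator
        ((exists_walk_cons_mem_iff K z a ω).trans (or_iff_right hz)) rfl

section Norm

variable {d : ℕ}

lemma eNorm_nonneg (x : Fin d → ℤ) : 0 ≤ eNorm x := Real.sqrt_nonneg _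

lemma eNorm_sq (x : Fin d → ℤ) : eNorm x ^ 2 = ∑ i, (x i : ℝ) ^ 2 :=
  Real.sq_sqrt (Finset.sum_nonneg fun _ _ => sq_nonneg _)

lemma eNorm_eq_norm (x : Fin d → ℤ) :
    eNorm x = ‖(WithLp.toLp 2 fun i => (x i : ℝ) : EuclideanSpace ℝ (Fin d))‖ := by
  simp [eNorm, EuclideanSpace.norm_eq]

lemma eNorm_add_le (x y : Fin d → ℤ) : eNorm (x + y) ≤ eNorm x + eNorm y := by
  have h : (WithLp.toLp 2 fun i => ((x + y) i : ℝ) : EuclideanSpace ℝ (Fin d)) =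
      WithLp.toLp 2 (fun i => (x i : ℝ)) + WithLp.toLp 2 (fun i => (y i : ℝ)) := by
    ext i
    simp
  rw [eNorm_eq_norm, eNorm_eq_norm, eNorm_eq_norm, h]
  exact norm_add_le _ _

lemma eNorm_step (a : Fin d × Bool) : eNorm (step a) = 1 := by
  simp [eNorm, step, apply_ite]

lemma eNorm_add_step_sq (x : Fin d → ℤ) (a : Fin d × Bool) :
    eNorm (x + step a) ^ 2 = eNorm x ^ 2 + 2 * (if a.2 then 1 else -1) * x a.1 + 1 := by
  have h : ∑ i, (step a i : ℝ) ^ 2 = 1 := by rw [← eNorm_sq, eNorm_step, one_pow]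
  simp only [eNorm_sq, Pi.add_apply, Int.cast_add, add_sq, Finset.sum_add_distrib, h]
  simp [step, apply_ite, Finset.sum_ite_eq']

lemma stepMean_eNorm_sq (hd : d ≠ 0) (x : Fin d → ℤ) :
    stepMean (fun y => eNorm y ^ 2) x = eNorm x ^ 2 + 1 := by
  simp only [stepMean, eNorm_add_step_sq, Fintype.sum_prod_type, Fintype.sum_bool, if_true]
  ring_nf
  simp
  field_simp

lemma log_eNorm_sq_le_stepMean (x : Fin 2 → ℤ) :
    Real.log (eNorm x ^ 2 + 1) ≤ stepMean (fun y => Real.log (eNorm y ^ 2 + 1)) x := by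
  have hpos : ∀ a, 0 < eNorm (x + step a) ^ 2 + 1 := fun a => by positivity
  rw [stepMean, le_div_iff₀ (by positivity), ← Real.log_prod fun a _ => (hpos a).ne']
  rw [show ((2 : ℕ) : ℝ) = 2 by norm_num, show (2 : ℝ) * 2 = (4 : ℕ) by norm_num, mul_comm,
    ← Real.log_pow]
  apply Real.log_le_log (by positivity)
  simp only [eNorm_add_step_sq]
  simp only [eNorm_sq, Fin.sum_univ_two, Fintype.prod_prod_type, Fin.prod_univ_two,
    Fintype.prod_bool, if_true, Bool.false_eq_true, if_false]
  set p : ℝ := (x 0 : ℝ)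
  set q : ℝ := (x 1 : ℝ)
  -- with `s = p² + q² + 1` the product is `s⁴ + 2s² + 8s + 5 + 16p²q²`
  nlinarith [sq_nonneg (p * q), sq_nonneg p, sq_nonneg q]

end Norm

section Estimates

variable {d : ℕ}

lemma stoppedMean_indicator_mem_Icc (hd : d ≠ 0) (S K : Set (Fin d → ℤ)) (n : ℕ)
    (x : Fin d → ℤ) : stoppedMean S (K.indicator 1) n x ∈ Set.Icc 0 1 := by
  have h0 := stoppedMean_mono (S := S) (F := fun _ => 0) (G := K.indicator 1)
    (fun y => Set.indicator_nonneg (fun _ _ => zero_le_one) y) n x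
  have h1 := stoppedMean_mono (S := S) (F := K.indicator 1) (G := fun _ => 1)
    (fun y => Set.indicator_le_self' (fun _ _ => zero_le_one) y) n x
  rw [stoppedMean_const hd] at h0 h1
  exact ⟨h0, h1⟩

lemma stoppedMean_indicator_far_le (hd : d ≠ 0) (S : Set (Fin d → ℤ)) {ρ : ℝ} (hρ : 0 < ρ)
    (n : ℕ) (z : Fin d → ℤ) :
    stoppedMean S ({x | ρ ≤ eNorm x}.indicator 1) n z ≤ (eNorm z ^ 2 + n) / ρ ^ 2 := by
  have hdom : (fun x => ρ ^ 2 * {x | ρ ≤ eNorm x}.indicator 1 x) ≤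
      fun x : Fin d → ℤ => eNorm x ^ 2 := by
    intro x
    by_cases hx : ρ ≤ eNorm x
    · simpa [hx] using pow_le_pow_left₀ hρ.le hx 2
    · simp [hx, sq_nonneg]
  rw [le_div_iff₀ (by positivity), mul_comm, ← stoppedMean_const_mul]
  calc stoppedMean S (fun x => ρ ^ 2 * {x | ρ ≤ eNorm x}.indicator 1 x) n z
      ≤ stoppedMean S (fun x => eNorm x ^ 2) n z := stoppedMean_mono hdom n z
    _ ≤ eNorm z ^ 2 + n * 1 :=
      stoppedMean_le_add_mul hd zero_le_one (fun x _ => (stepMean_eNorm_sq hd x).le) n z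
    _ = eNorm z ^ 2 + n := by rw [mul_one]

lemma stoppedMean_indicator_le_add_mul {K D : Set (Fin d → ℤ)} {M : ℝ} {n : ℕ} (hM : 0 ≤ M)
    (hD : ∀ x ∈ D, stoppedMean K (K.indicator 1) n x ≤ M) (z : Fin d → ℤ) :
    stoppedMean K (K.indicator 1) n z ≤
      stoppedMean (K ∪ D) (K.indicator 1) n z + M * stoppedMean (K ∪ D) (D.indicator 1) n z := by
  have hsub : ∀ x ∉ K, K.indicator 1 x ≤ stepMean (K.indicator 1) x := fun x hx => by
    rw [Set.indicator_of_notMem hx]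
    exact div_nonneg (Finset.sum_nonneg fun _ _ => Set.indicator_nonneg (fun _ _ => zero_le_one) _)
      (by positivity)
  have hle : K.indicator 1 ≤ K.indicator 1 + fun x => M * D.indicator 1 x := fun x =>
    le_add_of_nonneg_right (mul_nonneg hM (Set.indicator_nonneg (fun _ _ => zero_le_one) x))
  have hDM : ∀ x ∈ D, ∀ m ≤ n,
      stoppedMean K (K.indicator 1) m x ≤ K.indicator 1 x + M * D.indicator 1 x :=
    fun x hx m hm => by
      rw [Set.indicator_of_mem hx, Pi.one_apply, mul_one]
      exact ((monotone_stoppedMean hsub x hm).trans (hD x hx)).trans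
        (le_add_of_nonneg_left (Set.indicator_nonneg (fun _ _ => zero_le_one) x))
  calc stoppedMean K (K.indicator 1) n z
      ≤ stoppedMean (K ∪ D) (K.indicator 1 + fun x => M * D.indicator 1 x) n z :=
        stoppedMean_le_stoppedMean_union hle hDM n le_rfl z
    _ = _ := by rw [stoppedMean_add, stoppedMean_const_mul]

end Estimates

lemma stoppedMean_indicator_ball_mul_log_le (z : Fin 2 → ℤ) (hz : 1 ≤ eNorm z) (r : ℝ)
    (n : ℕ) :
    stoppedMean ({x | eNorm x ≤ r} ∪ {x | 2 * eNorm z ≤ eNorm x})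
        ({x | eNorm x ≤ r}.indicator 1) n z * Real.log ((eNorm z ^ 2 + 1) / (r ^ 2 + 1)) ≤
      Real.log 9 := by
  set K : Set (Fin 2 → ℤ) := {x | eNorm x ≤ r}
  set S := K ∪ {x | 2 * eNorm z ≤ eNorm x}
  set u := stoppedMean S (K.indicator 1) n z
  set M := Real.log (9 * eNorm z ^ 2 + 1)
  set m := Real.log (r ^ 2 + 1)
  set G : (Fin 2 → ℤ) → ℝ := (fun _ => M) + fun x => -(M - m) * K.indicator 1 x
  -- before stopping the walk stays below `2‖z‖`, so it never gets beyond `3‖z‖`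
  have hR : ∀ x ∈ {x | eNorm x ≤ 3 * eNorm z}, x ∉ S → ∀ a,
      x + step a ∈ {x | eNorm x ≤ 3 * eNorm z} := by
    intro x _ hS a
    have hx : eNorm x < 2 * eNorm z := not_le.1 fun h => hS (Or.inr h)
    have := eNorm_add_le x (step a)
    rw [eNorm_step] at this
    show eNorm (x + step a) ≤ 3 * eNorm z
    linarith
  have hFG : ∀ x ∈ {x | eNorm x ≤ 3 * eNorm z},
      Real.log (eNorm x ^ 2 + 1) ≤ G x := by
    intro x hx
    by_cases hK : x ∈ K
    · have : eNorm x ^ 2 ≤ r ^ 2 := pow_le_pow_left₀ (eNorm_nonneg x) hK 2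
      simp only [G, Pi.add_apply, Set.indicator_of_mem hK, Pi.one_apply]
      linarith [Real.log_le_log (by positivity) (by linarith : eNorm x ^ 2 + 1 ≤ r ^ 2 + 1)]
    · have : eNorm x ^ 2 ≤ (3 * eNorm z) ^ 2 := pow_le_pow_left₀ (eNorm_nonneg x) hx 2
      simp only [G, Pi.add_apply, Set.indicator_of_notMem hK]
      linarith [Real.log_le_log (by positivity)
        (by linarith : eNorm x ^ 2 + 1 ≤ 9 * eNorm z ^ 2 + 1)]
  have hsub : Real.log (eNorm z ^ 2 + 1) ≤ M - (M - m) * u := by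
    calc Real.log (eNorm z ^ 2 + 1)
        ≤ stoppedMean S (fun x => Real.log (eNorm x ^ 2 + 1)) n z :=
          le_stoppedMean (fun x _ => log_eNorm_sq_le_stepMean x) n z
      _ ≤ stoppedMean S G n z :=
          stoppedMean_le_stoppedMean_of_le_on _ hR hFG n z (by
            show eNorm z ≤ 3 * eNorm z
            linarith)
      _ = M - (M - m) * u := by
          rw [stoppedMean_add, stoppedMean_const two_ne_zero, stoppedMean_const_mul]
          ring
  have hM : M ≤ Real.log 9 + Real.log (eNorm z ^ 2 + 1) := by
    rw [← Real.log_mul (by norm_num) (by positivity)]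
    exact Real.log_le_log (by positivity) (by linarith)
  have hlog : Real.log ((eNorm z ^ 2 + 1) / (r ^ 2 + 1)) ≤ M - m := by
    rw [Real.log_div (by positivity) (by positivity)]
    linarith [Real.log_le_log (by positivity) (by linarith [sq_nonneg (eNorm z)] :
      eNorm z ^ 2 + 1 ≤ 9 * eNorm z ^ 2 + 1)]
  have hu : 0 ≤ u := (stoppedMean_indicator_mem_Icc two_ne_zero S K n z).1
  nlinarith

lemma log_div_le_two_mul_log_div {n r Q : ℝ} (hr : 1 ≤ r) (hrn : 4 * r ^ 2 ≤ n) (hnQ : n ≤ Q) :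
    Real.log (n / r ^ 2) ≤ 2 * Real.log ((Q + 1) / (r ^ 2 + 1)) := by
  have hr2 : 0 < r ^ 2 := by positivity
  have h2 : 2 ≤ n / (2 * r ^ 2) := by rw [le_div_iff₀ (by positivity)]; linarith
  have hQ : n / (2 * r ^ 2) ≤ (Q + 1) / (r ^ 2 + 1) := by
    rw [div_le_div_iff₀ (by positivity) (by positivity)]
    have : r ^ 2 + 1 ≤ 2 * r ^ 2 := by nlinarith
    nlinarith [mul_le_mul_of_nonneg_left this (by linarith : 0 ≤ n)]
  calc Real.log (n / r ^ 2) = Real.log 2 + Real.log (n / (2 * r ^ 2)) := by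
        rw [← Real.log_mul (by norm_num) (by positivity)]
        congr 1
        field_simp
    _ ≤ 2 * Real.log (n / (2 * r ^ 2)) := by
        linarith [Real.log_le_log (by norm_num) h2]
    _ ≤ 2 * Real.log ((Q + 1) / (r ^ 2 + 1)) := by
        gcongr

lemma prW_hit_le_of_forall_le {n : ℕ} {r M : ℝ} (hr : 1 ≤ r) (hrn : r ≤ Real.sqrt n / 2)
    (hM : ∀ y : Fin 2 → ℤ, Real.sqrt n ≤ eNorm y →
      prW 2 n {ω | ∃ t ≤ n, eNorm (walk y ω t) ≤ r} ≤ M)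
    {z : Fin 2 → ℤ} (hz : Real.sqrt n ≤ eNorm z) :
    prW 2 n {ω | ∃ t ≤ n, eNorm (walk z ω t) ≤ r} ≤
      2 * Real.log 9 / Real.log (n / r ^ 2) + M / 2 := by
  set K : Set (Fin 2 → ℤ) := {x | eNorm x ≤ r}
  set D : Set (Fin 2 → ℤ) := {x | 2 * eNorm z ≤ eNorm x}
  have hprW (y : Fin 2 → ℤ) : prW 2 n {ω | ∃ t ≤ n, eNorm (walk y ω t) ≤ r} =
      stoppedMean K (K.indicator 1) n y := prW_hit_eq_stoppedMean two_ne_zero K n y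
  have hn : 4 * r ^ 2 ≤ n := by
    have := pow_le_pow_left₀ (by positivity) hrn 2
    rw [div_pow, Real.sq_sqrt n.cast_nonneg] at this
    linarith
  have hQ : (n : ℝ) ≤ eNorm z ^ 2 := by
    simpa [Real.sq_sqrt n.cast_nonneg] using pow_le_pow_left₀ (Real.sqrt_nonneg _) hz 2
  have hz1 : 1 ≤ eNorm z := by nlinarith [eNorm_nonneg z]
  have hL : 0 < Real.log (n / r ^ 2) :=
    Real.log_pos ((one_lt_div (by positivity)).2 (by nlinarith))
  have hM0 : 0 ≤ M := (hprW z ▸ (stoppedMean_indicator_mem_Icc two_ne_zero K K n z).1).trans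
    (hM z hz)
  have hsplit := stoppedMean_indicator_le_add_mul (D := D) hM0 (fun y hy => (hprW y).symm ▸
    hM y (hz.trans (by linarith [eNorm_nonneg z, show 2 * eNorm z ≤ eNorm y from hy]))) z
  have hu : stoppedMean (K ∪ D) (K.indicator 1) n z ≤ 2 * Real.log 9 / Real.log (n / r ^ 2) := by
    rw [le_div_iff₀ hL]
    nlinarith [stoppedMean_indicator_ball_mul_log_le z hz1 r n, log_div_le_two_mul_log_div hr hn hQ,
      (stoppedMean_indicator_mem_Icc two_ne_zero (K ∪ D) K n z).1]
  have hv : stoppedMean (K ∪ D) (D.indicator 1) n z ≤ 1 / 2 := by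
    refine (stoppedMean_indicator_far_le two_ne_zero (K ∪ D) (by positivity) n z).trans ?_
    rw [div_le_div_iff₀ (by positivity) (by norm_num)]
    nlinarith
  rw [hprW]
  nlinarith

/-- `P_z[T_r ≤ n] ≤ C / log(n/r²)` for `1 ≤ r ≤ √n/2` and `‖z‖ ≥ √n`: the walk started at
`z` enters the ball of radius `r` within `n` steps with at most this probability. -/
theorem hit_ball_within_n_steps :
    ∃ C : ℝ, 0 < C ∧ ∀ n : ℕ, ∀ r : ℝ, ∀ z : Fin 2 → ℤ,
      1 ≤ r → r ≤ Real.sqrt n / 2 → Real.sqrt n ≤ eNorm z →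
      prW 2 n {ω | ∃ t ≤ n, eNorm (walk z ω t) ≤ r} ≤
        C / Real.log ((n : ℝ) / r ^ 2) := by
  refine ⟨4 * Real.log 9, by positivity, fun n r z hr hrn hz => ?_⟩
  set p : (Fin 2 → ℤ) → ℝ := fun y => prW 2 n {ω | ∃ t ≤ n, eNorm (walk y ω t) ≤ r}
  set P := sSup (p '' {y | Real.sqrt n ≤ eNorm y})
  have hbdd : BddAbove (p '' {y | Real.sqrt n ≤ eNorm y}) := ⟨1, by
    rintro _ ⟨y, -, rfl⟩
    exact (prW_hit_eq_stoppedMean two_ne_zero {x | eNorm x ≤ r} n y ▸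
      stoppedMean_indicator_mem_Icc two_ne_zero _ _ n y).2⟩
  have hpP : ∀ y, Real.sqrt n ≤ eNorm y → p y ≤ P := fun y hy => le_csSup hbdd ⟨y, hy, rfl⟩
  have hP : P ≤ 2 * Real.log 9 / Real.log (n / r ^ 2) + P / 2 :=
    csSup_le ⟨_, z, hz, rfl⟩ fun _ ⟨y, hy, hpy⟩ => hpy ▸ prW_hit_le_of_forall_le hr hrn hpP hy
  calc p z ≤ P := hpP z hz
    _ ≤ 4 * Real.log 9 / Real.log (n / r ^ 2) := by
        rw [mul_div_assoc] at hP ⊢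
        linarith
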